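/- arXiv:2409.12240 — 4 statements merged into one kernel-verified Lean document; each statement's English description precedes it below -/
import Mathlib

section
/- Let G=(V,E) be a finite tree and let Ψ be the state represented by a graph tensor network on G. Fix a vertex a∈V. Then the environment tensor ξ_a factorizes as a product of the subtree message matrices of the neighbors of a: for all families (j_b)_{b∈∂a} and (j'_b)_{b∈∂a} of bond-index values, ξ_a[(j_b)_{b∈∂a},(j'_b)_{b∈∂a}] = Π_{b∈∂a} m_{b→a}[j_b, j'_b]. -/
open scoped BigOperators

variable {V : Type*} [Fintype V] [DecidableEq V]

/-- A graph tensor network on a finite simple graph `G`: a bond dimension `d e ≥ 1` for each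
edge `e`, and for each vertex `a` a tensor `T a` taking a physical index in `Fin 2` and a bond
index (a natural number, relevant values being those `< d e`) for each edge incident to `a`. -/
structure TensorNet (G : SimpleGraph V) [DecidableRel G.Adj] where
  d : G.edgeSet → ℕ
  d_pos : ∀ e, 0 < d e
  T : ∀ a : V, Fin 2 → ({e : G.edgeSet // a ∈ (e : Sym2 V)} → ℕ) → ℂ

namespace TensorNet

variable {G : SimpleGraph V} [DecidableRel G.Adj]

/-- The state represented by a graph tensor network:
`Ψ[(i_a)_{a∈V}] = Σ_{j} Π_{a∈V} T_a[i_a, (j_{ab})_{b∈∂a}]`, the sum running over all assignments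
of a bond-index value `j_e ∈ {0,…,d_e−1}` to each edge `e ∈ E`. -/
noncomputable def psi (net : TensorNet G) (i : V → Fin 2) : ℂ :=
  ∑ j ∈ Fintype.piFinset (fun e : G.edgeSet => Finset.range (net.d e)),
    ∏ a : V, net.T a (i a) (fun e => j e.1)

/-- The (i,i') entry of the single-qubit reduced density matrix
`ρ_a = Tr_{V∖{a}} |Ψ⟩⟨Ψ|` of the represented state at vertex `a`. -/
noncomputable def rho (net : TensorNet G) (a : V) (i i' : Fin 2) : ℂ :=
  ∑ f : ({c : V // c ≠ a} → Fin 2),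
    net.psi (fun c => if h : c = a then i else f ⟨c, h⟩) *
      (starRingEnd ℂ) (net.psi (fun c => if h : c = a then i' else f ⟨c, h⟩))

/-- The environment tensor `ξ_a` of vertex `a`. -/
noncomputable def env (net : TensorNet G) (a : V)
    (J J' : {e : G.edgeSet // a ∈ (e : Sym2 V)} → ℕ) : ℂ :=
  ∑ i : ({c : V // c ≠ a} → Fin 2),
    ∑ k ∈ Fintype.piFinset (fun e : {e : G.edgeSet // a ∉ (e : Sym2 V)} =>
        Finset.range (net.d e.1)),
      ∑ k' ∈ Fintype.piFinset (fun e : {e : G.edgeSet // a ∉ (e : Sym2 V)} =>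
          Finset.range (net.d e.1)),
        ∏ c : {c : V // c ≠ a},
          net.T c.1 (i c)
              (fun e => if h : a ∈ (e.1 : Sym2 V) then J ⟨e.1, h⟩ else k ⟨e.1, h⟩) *
            (starRingEnd ℂ)
              (net.T c.1 (i c)
                (fun e => if h : a ∈ (e.1 : Sym2 V) then J' ⟨e.1, h⟩ else k' ⟨e.1, h⟩))

end TensorNet

/-- `branchV G a b` is the vertex set `V_{b→a}` of the connected component of `b` in the
graph `G` with the edge `{a,b}` removed. -/
def branchV (G : SimpleGraph V) (a b : V) : Set V :=
  {c | (G.deleteEdges {s(a, b)}).Reachable b c}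

/-- `branchE G a b` is the edge set `E_{b→a}` of the connected component of `b` in the
graph `G` with the edge `{a,b}` removed. -/
def branchE (G : SimpleGraph V) [DecidableRel G.Adj] (a b : V) : Set G.edgeSet :=
  {e | (e : Sym2 V) ≠ s(a, b) ∧ ∀ x ∈ (e : Sym2 V), x ∈ branchV G a b}

namespace TensorNet

variable {G : SimpleGraph V} [DecidableRel G.Adj]

open scoped Classical in
/-- The message matrix `m_{b→a}` of the directed edge `b → a`. -/
noncomputable def message (net : TensorNet G) (a b : V) (j j' : ℕ) : ℂ :=
  ∑ i : ({c : V // c ∈ branchV G a b} → Fin 2),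
    ∑ k ∈ Fintype.piFinset (fun e : {e : G.edgeSet // e ∈ branchE G a b} =>
        Finset.range (net.d e.1)),
      ∑ k' ∈ Fintype.piFinset (fun e : {e : G.edgeSet // e ∈ branchE G a b} =>
          Finset.range (net.d e.1)),
        ∏ c : {c : V // c ∈ branchV G a b},
          net.T c.1 (i c)
              (fun e => if (e.1 : Sym2 V) = s(a, b) then j
                else if h : e.1 ∈ branchE G a b then k ⟨e.1, h⟩ else 0) *
            (starRingEnd ℂ)
              (net.T c.1 (i c)
                (fun e => if (e.1 : Sym2 V) = s(a, b) then j'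
                  else if h : e.1 ∈ branchE G a b then k' ⟨e.1, h⟩ else 0))

open scoped Classical in
/-- The branch vector `w_{b→a}(j)`. -/
noncomputable def branchVec (net : TensorNet G) (a b : V) (j : ℕ) :
    ({c : V // c ∈ branchV G a b} → Fin 2) → ℂ := fun i =>
  ∑ k ∈ Fintype.piFinset (fun e : {e : G.edgeSet // e ∈ branchE G a b} =>
      Finset.range (net.d e.1)),
    ∏ c : {c : V // c ∈ branchV G a b},
      net.T c.1 (i c)
        (fun e => if (e.1 : Sym2 V) = s(a, b) then j
          else if h : e.1 ∈ branchE G a b then k ⟨e.1, h⟩ else 0)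

end TensorNet

/-!
Deleting the vertex `a` splits the tree into the branches `V_{b→a}`, one for each neighbour `b`,
and the edges not at `a` into the branch edge sets `E_{b→a}`; an edge at a vertex of `V_{b→a}` is
either `{a,b}` or lies in `E_{b→a}`. So for fixed physical indices the contraction of all tensors
but `T_a` with bond indices `J` at `a` is the product over `b` of the branch vectors
`w_{b→a}(J_b)`, and the sum over physical indices of this ket times the conjugate bra factorizes
branchwise into `∏_b ∑_i w_{b→a}(J_b)_i · conj (w_{b→a}(J'_b)_i) = ∏_b m_{b→a}[J_b, J'_b]`.
-/

open SimpleGraph Finset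

section Branches

variable {V : Type*} {G : SimpleGraph V} {a b b' c : V} {e : G.edgeSet}

lemma not_reachable_of_mem_branchV (hG : G.IsTree) (hab : G.Adj a b) (hc : c ∈ branchV G a b) :
    ¬ (G.deleteEdges {s(a, b)}).Reachable a c := fun hac =>
  isBridge_iff.mp (isAcyclic_iff_forall_adj_isBridge.mp hG.isAcyclic hab) (hac.trans hc.symm)

lemma ne_of_mem_branchV (hG : G.IsTree) (hab : G.Adj a b) (hc : c ∈ branchV G a b) : c ≠ a := by
  rintro rfl
  exact not_reachable_of_mem_branchV hG hab hc .rfl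

lemma exists_adj_mem_branchV (hG : G.Preconnected) (hc : c ≠ a) :
    ∃ b, G.Adj a b ∧ c ∈ branchV G a b := by
  classical
  obtain ⟨p, hp⟩ := (hG a c).some.toPath
  cases p with
  | nil => exact absurd rfl hc
  | cons hab q =>
    rw [Walk.cons_isPath_iff] at hp
    exact ⟨_, hab, reachable_deleteEdges_iff_exists_walk.mpr
      ⟨q, fun h => hp.2 (q.fst_mem_support_of_mem_edges h)⟩⟩

lemma eq_of_mem_branchV_of_mem_branchV (hG : G.IsTree) (hb : G.Adj a b) (hb' : G.Adj a b')
    (hc : c ∈ branchV G a b) (hc' : c ∈ branchV G a b') : b = b' := by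
  classical
  by_contra hne
  obtain ⟨w, hw⟩ := reachable_deleteEdges_iff_exists_walk.mp hc'
  -- `w` runs from `b'` to `c` avoiding `{a,b'}`: its tail from `a` contradicts `hc'` if it
  -- passes through `{a,b}`, and otherwise `a - b'` followed by `w` contradicts `hc`.
  by_cases hwb : s(a, b) ∈ w.edges
  · have ha := w.fst_mem_support_of_mem_edges hwb
    exact not_reachable_of_mem_branchV hG hb' hc' <| reachable_deleteEdges_iff_exists_walk.mpr
      ⟨w.dropUntil a ha, fun h => hw (w.edges_dropUntil_subset_edges ha h)⟩
  · refine not_reachable_of_mem_branchV hG hb hc <| reachable_deleteEdges_iff_exists_walk.mpr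
      ⟨.cons hb' w, ?_⟩
    simp [hwb, hne, hb.ne']

lemma eq_of_mem_of_mem_branchV (hG : G.IsTree) (hab : G.Adj a b) (ha : a ∈ (e : Sym2 V))
    (hce : c ∈ (e : Sym2 V)) (hc : c ∈ branchV G a b) : (e : Sym2 V) = s(a, b) := by
  have hac := (ne_of_mem_branchV hG hab hc).symm
  have he : (e : Sym2 V) = s(a, c) := (Sym2.mem_and_mem_iff hac).mp ⟨ha, hce⟩
  have hadj : G.Adj a c := G.mem_edgeSet.mp (he ▸ e.2)
  rw [he, eq_of_mem_branchV_of_mem_branchV hG hadj hab .rfl hc]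

variable [DecidableRel G.Adj]

lemma mem_branchE_of_mem (ha : a ∉ (e : Sym2 V)) (hce : c ∈ (e : Sym2 V))
    (hc : c ∈ branchV G a b) : e ∈ branchE G a b := by
  have hne : (e : Sym2 V) ≠ s(a, b) := fun h => ha (h ▸ Sym2.mem_mk_left a b)
  refine ⟨hne, fun x hx => ?_⟩
  obtain ⟨e, he⟩ := e
  obtain ⟨d, rfl⟩ := Sym2.mem_iff_exists.mp hce
  have hcd : (G.deleteEdges {s(a, b)}).Adj c d := deleteEdges_adj.mpr ⟨he, hne⟩
  rcases Sym2.mem_iff.mp hx with rfl | rfl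
  exacts [hc, hc.trans hcd.reachable]

lemma notMem_of_mem_branchE (hG : G.IsTree) (hab : G.Adj a b) (he : e ∈ branchE G a b) :
    a ∉ (e : Sym2 V) := fun ha => ne_of_mem_branchV hG hab (he.2 a ha) rfl

noncomputable def branchVertexEquiv (hG : G.IsTree) (a : V) :
    (Σ b : {b // G.Adj a b}, {c // c ∈ branchV G a b}) ≃ {c // c ≠ a} :=
  Equiv.ofBijective (fun p => ⟨p.2, ne_of_mem_branchV hG p.1.2 p.2.2⟩) <| by
    refine ⟨?_, fun ⟨c, hc⟩ => ?_⟩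
    · rintro ⟨⟨b, hb⟩, ⟨c, hc⟩⟩ ⟨⟨b', hb'⟩, ⟨c', hc'⟩⟩ h
      obtain rfl : c = c' := congrArg Subtype.val h
      obtain rfl := eq_of_mem_branchV_of_mem_branchV hG hb hb' hc hc'
      rfl
    · obtain ⟨b, hb, hcb⟩ := exists_adj_mem_branchV hG.connected.preconnected hc
      exact ⟨⟨⟨b, hb⟩, ⟨c, hcb⟩⟩, rfl⟩

noncomputable def branchEdgeEquiv (hG : G.IsTree) (a : V) :
    (Σ b : {b // G.Adj a b}, {e // e ∈ branchE G a b}) ≃ {e : G.edgeSet // a ∉ (e : Sym2 V)} :=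
  Equiv.ofBijective (fun p => ⟨p.2, notMem_of_mem_branchE hG p.1.2 p.2.2⟩) <| by
    refine ⟨?_, fun ⟨e, ha⟩ => ?_⟩
    · rintro ⟨⟨b, hb⟩, ⟨e, he⟩⟩ ⟨⟨b', hb'⟩, ⟨e', he'⟩⟩ h
      obtain rfl : e = e' := congrArg Subtype.val h
      obtain rfl := eq_of_mem_branchV_of_mem_branchV hG hb hb'
        (he.2 _ (Sym2.out_fst_mem _)) (he'.2 _ (Sym2.out_fst_mem _))
      rfl
    · have hc : (e : Sym2 V).out.1 ≠ a := fun h => ha (h ▸ Sym2.out_fst_mem _)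
      obtain ⟨b, hb, hcb⟩ := exists_adj_mem_branchV hG.connected.preconnected hc
      exact ⟨⟨⟨b, hb⟩, ⟨e, mem_branchE_of_mem ha (Sym2.out_fst_mem _) hcb⟩⟩, rfl⟩

def edgeOfAdj (b : {b // G.Adj a b}) : {e : G.edgeSet // a ∈ (e : Sym2 V)} :=
  ⟨⟨s(a, b.1), G.mem_edgeSet.mpr b.2⟩, Sym2.mem_mk_left a b.1⟩

end Branches

lemma sum_sum_prod_mul_star {α γ γ' R : Type*} [Fintype α] [CommSemiring R] [StarRing R]
    (s : Finset γ) (t : Finset γ') (f : γ → α → R) (g : γ' → α → R) :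
    ∑ k ∈ s, ∑ k' ∈ t, ∏ c, f k c * starRingEnd R (g k' c) =
      (∑ k ∈ s, ∏ c, f k c) * starRingEnd R (∑ k' ∈ t, ∏ c, g k' c) := by
  simp only [map_sum, map_prod, sum_mul_sum, prod_mul_distrib]

section Blocks

variable {ι α β R : Type*} {κ : ι → Type*} [Fintype ι] [DecidableEq ι] [∀ i, Fintype (κ i)]
  [∀ i, DecidableEq (κ i)] [Fintype α] [DecidableEq α] [CommSemiring R]

lemma prod_sum_piFinset_sigma (σ : (Σ i, κ i) ≃ α) (t : α → Finset β)
    (f : ∀ i, (κ i → β) → R) :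
    ∏ i, ∑ y ∈ Fintype.piFinset (fun x => t (σ ⟨i, x⟩)), f i y =
      ∑ k ∈ Fintype.piFinset t, ∏ i, f i (fun x => k (σ ⟨i, x⟩)) := by
  rw [prod_univ_sum]
  refine sum_equiv ((Equiv.piCurry fun _ _ => β).symm.trans (Equiv.piCongrLeft (fun _ => β) σ))
    (fun y => ?_) (fun _ _ => ?_)
  · simp only [Fintype.mem_piFinset, ← σ.forall_congr_right, Equiv.trans_apply,
      Equiv.piCongrLeft_apply_apply]
    rw [Sigma.forall]
    rfl
  · simp only [Equiv.trans_apply, Equiv.piCongrLeft_apply_apply]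
    rfl

lemma prod_sum_pi_sigma [Fintype β] (σ : (Σ i, κ i) ≃ α) (f : ∀ i, (κ i → β) → R) :
    ∏ i, ∑ y : κ i → β, f i y = ∑ k : α → β, ∏ i, f i (fun x => k (σ ⟨i, x⟩)) := by
  simpa only [Fintype.piFinset_univ] using prod_sum_piFinset_sigma σ (fun _ => univ) f

end Blocks

namespace TensorNet

variable {G : SimpleGraph V} [DecidableRel G.Adj] (net : TensorNet G)

/-- The ket half of `env`: the contraction of all tensors but `T a`, at physical indices `i`
and with the bond indices `J` on the edges at `a`. -/
noncomputable def envVec (a : V) (J : {e : G.edgeSet // a ∈ (e : Sym2 V)} → ℕ)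
    (i : {c : V // c ≠ a} → Fin 2) : ℂ :=
  ∑ k ∈ Fintype.piFinset (fun e : {e : G.edgeSet // a ∉ (e : Sym2 V)} =>
      Finset.range (net.d e.1)),
    ∏ c : {c : V // c ≠ a},
      net.T c.1 (i c) (fun e => if h : a ∈ (e.1 : Sym2 V) then J ⟨e.1, h⟩ else k ⟨e.1, h⟩)

lemma env_eq_sum_envVec_mul_conj (a : V) (J J' : {e : G.edgeSet // a ∈ (e : Sym2 V)} → ℕ) :
    net.env a J J' = ∑ i, net.envVec a J i * starRingEnd ℂ (net.envVec a J' i) :=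
  sum_congr rfl fun _ _ => sum_sum_prod_mul_star _ _ _ _

open scoped Classical in
lemma message_eq_sum_branchVec_mul_conj (a b : V) (j j' : ℕ) :
    net.message a b j j' = ∑ i, net.branchVec a b j i * starRingEnd ℂ (net.branchVec a b j' i) :=
  sum_congr rfl fun _ _ => sum_sum_prod_mul_star _ _ _ _

open scoped Classical in
lemma envVec_eq_prod_branchVec (hG : G.IsTree) (a : V)
    (J : {e : G.edgeSet // a ∈ (e : Sym2 V)} → ℕ) (i : {c : V // c ≠ a} → Fin 2) :
    net.envVec a J i =
      ∏ b, net.branchVec a b.1 (J (edgeOfAdj b)) (fun c => i (branchVertexEquiv hG a ⟨b, c⟩)) := by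
  refine ((prod_sum_piFinset_sigma (branchEdgeEquiv hG a) (fun e => range (net.d e.1)) _).trans
    (sum_congr rfl fun k _ => ?_)).symm
  rw [← (branchVertexEquiv hG a).prod_comp, Fintype.prod_sigma]
  refine prod_congr rfl fun b _ => prod_congr rfl fun c _ =>
    congrArg (net.T c.1 _) (funext fun e => ?_)
  by_cases ha : a ∈ (e.1 : Sym2 V)
  · have hab := eq_of_mem_of_mem_branchV hG b.2 ha e.2 c.2
    rw [if_pos hab, dif_pos ha]
    exact congrArg J (Subtype.ext (Subtype.ext hab.symm))
  · have hab : (e.1 : Sym2 V) ≠ s(a, b.1) := fun h => ha (h ▸ Sym2.mem_mk_left _ _)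
    rw [if_neg hab, dif_pos (mem_branchE_of_mem ha e.2 c.2), dif_neg ha]
    rfl

end TensorNet

open TensorNet in
theorem environment_factorizes_on_tree_general
    {V : Type*} [Fintype V] [DecidableEq V] {G : SimpleGraph V} [DecidableRel G.Adj]
    (hG : G.IsTree) (net : TensorNet G) (a : V)
    (J J' : {e : G.edgeSet // a ∈ (e : Sym2 V)} → ℕ) :
    net.env a J J' =
      ∏ b : {b : V // G.Adj a b},
        net.message a b.1
          (J ⟨⟨s(a, b.1), (SimpleGraph.mem_edgeSet G).mpr b.2⟩, Sym2.mem_mk_left a b.1⟩)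
          (J' ⟨⟨s(a, b.1), (SimpleGraph.mem_edgeSet G).mpr b.2⟩, Sym2.mem_mk_left a b.1⟩) := by
  classical
  simp only [env_eq_sum_envVec_mul_conj, envVec_eq_prod_branchVec net hG, map_prod,
    ← prod_mul_distrib, message_eq_sum_branchVec_mul_conj, edgeOfAdj]
  rw [prod_sum_pi_sigma (branchVertexEquiv hG a)]

/-- For a graph tensor network on a finite tree `G` and a vertex `a`, the
environment tensor `ξ_a` factorizes as the product, over the neighbors `b` of `a`, of the
subtree message matrices `m_{b→a}` evaluated at the bond indices of the edge `{a,b}`. -/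
theorem environment_factorizes_on_tree
    {V : Type*} [Fintype V] [DecidableEq V] {G : SimpleGraph V} [DecidableRel G.Adj]
    (hG : G.IsTree) (net : TensorNet G) (a : V)
    (J J' : {e : G.edgeSet // a ∈ (e : Sym2 V)} → ℕ)
    (hJ : ∀ e, J e < net.d e.1) (hJ' : ∀ e, J' e < net.d e.1) :
    net.env a J J' =
      ∏ b : {b : V // G.Adj a b},
        net.message a b.1
          (J ⟨⟨s(a, b.1), (SimpleGraph.mem_edgeSet G).mpr b.2⟩, Sym2.mem_mk_left a b.1⟩)
          (J' ⟨⟨s(a, b.1), (SimpleGraph.mem_edgeSet G).mpr b.2⟩, Sym2.mem_mk_left a b.1⟩) :=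
  environment_factorizes_on_tree_general hG net a J J'
end

section
/- Let G=(V,E) be a finite tree with a graph tensor network on it, and let b→a be a directed edge. Then the message matrix m_{b→a} equals the Gram matrix of the branch vectors: m_{b→a}[j,j'] = ⟨w_{b→a}(j'), w_{b→a}(j)⟩ for all j,j'∈{0,…,d_ab−1} (with the inner product conjugate-linear in the first argument). In particular, m_{b→a} is a Hermitian positive semidefinite matrix. -/
open scoped BigOperators

variable {V : Type*} [Fintype V] [DecidableEq V]

open scoped Classical ComplexOrder in
/-- On a finite tree, the message matrix `m_{b→a}` equals the Gram matrix of
the branch vectors, `m_{b→a}[j,j'] = ⟨w_{b→a}(j'), w_{b→a}(j)⟩` (inner product conjugate-linear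
in the first argument); in particular, `m_{b→a}` is a Hermitian positive semidefinite matrix. -/
theorem message_is_gram_matrix_and_posSemidef
    {V : Type*} [Fintype V] [DecidableEq V] {G : SimpleGraph V} [DecidableRel G.Adj]
    (hG : G.IsTree) (net : TensorNet G) (a b : V) (hab : G.Adj a b) :
    (∀ j j' : ℕ, j < net.d ⟨s(a, b), (SimpleGraph.mem_edgeSet G).mpr hab⟩ →
        j' < net.d ⟨s(a, b), (SimpleGraph.mem_edgeSet G).mpr hab⟩ →
        net.message a b j j' =
          ∑ i : ({c : V // c ∈ branchV G a b} → Fin 2),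
            (starRingEnd ℂ) (net.branchVec a b j' i) * net.branchVec a b j i) ∧
      (Matrix.of fun p q : Fin (net.d ⟨s(a, b), (SimpleGraph.mem_edgeSet G).mpr hab⟩) =>
          net.message a b (p : ℕ) (q : ℕ)).IsHermitian ∧
      (Matrix.of fun p q : Fin (net.d ⟨s(a, b), (SimpleGraph.mem_edgeSet G).mpr hab⟩) =>
          net.message a b (p : ℕ) (q : ℕ)).PosSemidef := by
  classical
  have key : ∀ j j' : ℕ, net.message a b j j' =
      ∑ i : ({c : V // c ∈ branchV G a b} → Fin 2),
        (starRingEnd ℂ) (net.branchVec a b j' i) * net.branchVec a b j i := by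
    intro j j'
    unfold TensorNet.message TensorNet.branchVec
    refine Finset.sum_congr rfl fun i _ => ?_
    rw [map_sum, Finset.sum_mul_sum, Finset.sum_comm]
    refine Finset.sum_congr rfl fun k _ => Finset.sum_congr rfl fun k' _ => ?_
    rw [Finset.prod_mul_distrib, ← map_prod, mul_comm]
  set M : Matrix (Fin (net.d ⟨s(a, b), (SimpleGraph.mem_edgeSet G).mpr hab⟩))
      (Fin (net.d ⟨s(a, b), (SimpleGraph.mem_edgeSet G).mpr hab⟩)) ℂ :=
    Matrix.of fun p q => net.message a b (p : ℕ) (q : ℕ) with hM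
  set W : Matrix (Fin (net.d ⟨s(a, b), (SimpleGraph.mem_edgeSet G).mpr hab⟩))
      ({c : V // c ∈ branchV G a b} → Fin 2) ℂ :=
    Matrix.of fun p i => net.branchVec a b (p : ℕ) i with hW
  have hMW : M = W * W.conjTranspose := by
    ext p q
    simp only [hM, hW, Matrix.of_apply, Matrix.mul_apply, Matrix.conjTranspose_apply, key,
      starRingEnd_apply]
    exact Finset.sum_congr rfl fun i _ => mul_comm _ _
  have psd : M.PosSemidef := hMW ▸ Matrix.posSemidef_self_mul_conjTranspose W
  exact ⟨fun j j' _ _ => key j j', psd.isHermitian, psd⟩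
end

section
/- Let G=(V,E) be a finite simple graph with a graph tensor network on it, let b→a be a directed edge, and suppose that for each c∈∂b\{a} a Hermitian positive semidefinite matrix m_{c→b} ∈ ℂ^{d_cb×d_cb} is given. Then the belief-propagation update m_{b→a}[j,j'] = Σ T_b[i_b,(j_{cb})_{c∈∂b}]·T_b*[i_b,(j'_{cb})_{c∈∂b}]·Π_{c∈∂b\{a}} m_{c→b}[j_{cb}, j'_{cb}] — summed over i_b∈{0,1} and over all unprimed and primed bond-index values on the edges {c,b} with c∈∂b\{a}, with the bond index of edge {a,b} fixed to j (unprimed) and j' (primed) — produces a Hermitian positive semidefinite matrix m_{b→a} ∈ ℂ^{d_ab×d_ab}. -/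
open scoped BigOperators

variable {V : Type*} [Fintype V] [DecidableEq V]

/-- The element of the incident-edge set of `b` given by a neighbor `c` of `b`. -/
def nbrEdge {V : Type*} [Fintype V] [DecidableEq V] {G : SimpleGraph V} [DecidableRel G.Adj]
    {b c : V} (h : G.Adj b c) : {e : G.edgeSet // b ∈ (e : Sym2 V)} :=
  ⟨⟨s(b, c), (SimpleGraph.mem_edgeSet G).mpr h⟩, Sym2.mem_mk_left b c⟩

/-!
The update matrix is `Σ_{i_b} F_{i_b} K F_{i_b}ᴴ`, where `F_{i_b}[j, g] = T_b[i_b, j, g]` and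
`K[g, g'] = Π_c m_{c→b}[g_c, g'_c]` is the Kronecker product of the incoming messages. Writing
each message as `m_c = B_cᴴ B_c`, the Kronecker product is `Bᴴ B` for the Kronecker product `B` of
the `B_c`, hence positive semidefinite; congruence by `F_{i_b}` and summation preserve this.
-/

namespace Matrix

open scoped ComplexOrder

section piKronecker

variable {ι : Type*} [Fintype ι] {l m n : ι → Type*} {R : Type*}

def piKronecker [CommMonoid R] (A : ∀ i, Matrix (m i) (n i) R) :
    Matrix (∀ i, m i) (∀ i, n i) R :=
  of fun g g' => ∏ i, A i (g i) (g' i)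

theorem piKronecker_mul [CommSemiring R] [DecidableEq ι] [∀ i, Fintype (m i)]
    (A : ∀ i, Matrix (l i) (m i) R) (B : ∀ i, Matrix (m i) (n i) R) :
    piKronecker A * piKronecker B = piKronecker fun i => A i * B i := by
  ext g g'
  simp only [piKronecker, mul_apply, of_apply, Fintype.prod_sum, Finset.prod_mul_distrib]

theorem conjTranspose_piKronecker [CommMonoid R] [StarMul R] (A : ∀ i, Matrix (m i) (n i) R) :
    (piKronecker A)ᴴ = piKronecker fun i => (A i)ᴴ := by
  ext g g'
  simp [piKronecker, conjTranspose_apply, star_prod]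

end piKronecker

variable {𝕜 : Type*} [RCLike 𝕜] {m n : Type*} [Fintype n]

open scoped MatrixOrder in
theorem PosSemidef.exists_eq_conjTranspose_mul_self [DecidableEq n] {A : Matrix n n 𝕜}
    (hA : A.PosSemidef) : ∃ B : Matrix n n 𝕜, A = Bᴴ * B :=
  ⟨CFC.sqrt A, by
    rw [(nonneg_iff_posSemidef.mp (CFC.sqrt_nonneg A)).isHermitian.eq,
      CFC.sqrt_mul_sqrt_self A hA.nonneg]⟩

theorem PosSemidef.piKronecker {ι : Type*} [Fintype ι] [DecidableEq ι] {n : ι → Type*}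
    [∀ i, Fintype (n i)] [∀ i, DecidableEq (n i)] {A : ∀ i, Matrix (n i) (n i) 𝕜}
    (hA : ∀ i, (A i).PosSemidef) : (Matrix.piKronecker A).PosSemidef := by
  choose B hB using fun i => (hA i).exists_eq_conjTranspose_mul_self
  rw [funext hB, ← piKronecker_mul, ← conjTranspose_piKronecker]
  exact posSemidef_conjTranspose_mul_self _

theorem mul_mul_conjTranspose_apply (F : Matrix m n 𝕜) (K : Matrix n n 𝕜) (j j' : m) :
    (F * K * Fᴴ) j j' = ∑ g, ∑ g', F j g * star (F j' g') * K g g' := by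
  simp only [mul_apply, conjTranspose_apply, Finset.sum_mul]
  rw [Finset.sum_comm]
  exact Finset.sum_congr rfl fun _ _ => Finset.sum_congr rfl fun _ _ => by ring

end Matrix

open Matrix

open scoped ComplexOrder in
/-- For a graph tensor network on a finite simple graph, given a directed edge
`b → a` and Hermitian positive semidefinite message matrices `m_{c→b}` for all `c ∈ ∂b∖{a}`, the
belief-propagation update produces a Hermitian positive semidefinite matrix `m_{b→a}`. -/
theorem bp_update_posSemidef
    {V : Type*} [Fintype V] [DecidableEq V] {G : SimpleGraph V} [DecidableRel G.Adj]
    (net : TensorNet G) (a b : V) (hab : G.Adj a b)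
    (m : ∀ c : {c : V // G.Adj b c ∧ c ≠ a},
      Matrix (Fin (net.d (nbrEdge c.2.1).1)) (Fin (net.d (nbrEdge c.2.1).1)) ℂ)
    (hm : ∀ c, (m c).IsHermitian ∧ (m c).PosSemidef) :
    (Matrix.of fun j j' : Fin (net.d ⟨s(a, b), (SimpleGraph.mem_edgeSet G).mpr hab⟩) =>
        ∑ ib : Fin 2,
          ∑ g : (∀ c : {c : V // G.Adj b c ∧ c ≠ a}, Fin (net.d (nbrEdge c.2.1).1)),
            ∑ g' : (∀ c : {c : V // G.Adj b c ∧ c ≠ a}, Fin (net.d (nbrEdge c.2.1).1)),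
              net.T b ib (fun e =>
                  if (e.1 : Sym2 V) = s(a, b) then (j : ℕ)
                  else if h2 : G.Adj b (Sym2.Mem.other e.2) ∧ (Sym2.Mem.other e.2) ≠ a then
                    (g ⟨Sym2.Mem.other e.2, h2⟩ : ℕ)
                  else 0) *
                (starRingEnd ℂ)
                  (net.T b ib (fun e =>
                    if (e.1 : Sym2 V) = s(a, b) then (j' : ℕ)
                    else if h2 : G.Adj b (Sym2.Mem.other e.2) ∧ (Sym2.Mem.other e.2) ≠ a then
                      (g' ⟨Sym2.Mem.other e.2, h2⟩ : ℕ)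
                    else 0)) *
                ∏ c : {c : V // G.Adj b c ∧ c ≠ a}, m c (g c) (g' c)).IsHermitian ∧
    (Matrix.of fun j j' : Fin (net.d ⟨s(a, b), (SimpleGraph.mem_edgeSet G).mpr hab⟩) =>
        ∑ ib : Fin 2,
          ∑ g : (∀ c : {c : V // G.Adj b c ∧ c ≠ a}, Fin (net.d (nbrEdge c.2.1).1)),
            ∑ g' : (∀ c : {c : V // G.Adj b c ∧ c ≠ a}, Fin (net.d (nbrEdge c.2.1).1)),
              net.T b ib (fun e =>
                  if (e.1 : Sym2 V) = s(a, b) then (j : ℕ)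
                  else if h2 : G.Adj b (Sym2.Mem.other e.2) ∧ (Sym2.Mem.other e.2) ≠ a then
                    (g ⟨Sym2.Mem.other e.2, h2⟩ : ℕ)
                  else 0) *
                (starRingEnd ℂ)
                  (net.T b ib (fun e =>
                    if (e.1 : Sym2 V) = s(a, b) then (j' : ℕ)
                    else if h2 : G.Adj b (Sym2.Mem.other e.2) ∧ (Sym2.Mem.other e.2) ≠ a then
                      (g' ⟨Sym2.Mem.other e.2, h2⟩ : ℕ)
                    else 0)) *
                ∏ c : {c : V // G.Adj b c ∧ c ≠ a}, m c (g c) (g' c)).PosSemidef := by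
  refine (fun h : PosSemidef _ => ⟨h.isHermitian, h⟩) ?_
  let F : Fin 2 → Matrix (Fin (net.d ⟨s(a, b), (SimpleGraph.mem_edgeSet G).mpr hab⟩))
      (∀ c : {c : V // G.Adj b c ∧ c ≠ a}, Fin (net.d (nbrEdge c.2.1).1)) ℂ :=
    fun ib => of fun j g => net.T b ib (fun e =>
      if (e.1 : Sym2 V) = s(a, b) then (j : ℕ)
      else if h2 : G.Adj b (Sym2.Mem.other e.2) ∧ (Sym2.Mem.other e.2) ≠ a then
        (g ⟨Sym2.Mem.other e.2, h2⟩ : ℕ)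
      else 0)
  have hK : (piKronecker m).PosSemidef := PosSemidef.piKronecker (A := m) fun c => (hm c).2
  convert posSemidef_sum Finset.univ fun ib _ => hK.mul_mul_conjTranspose_same (F ib) using 1
  ext j j'
  simp only [Matrix.sum_apply, mul_mul_conjTranspose_apply]
  rfl
end

section
/- Let G=(V,E) be a finite tree with a graph tensor network in Vidal form on it, and let {a,b}∈E. Then, under the natural identification of ⨂_{c∈V}ℂ² with (⨂_{c∈V_{a→b}}ℂ²) ⊗ (⨂_{c∈V_{b→a}}ℂ²), the represented state factorizes across the edge cut as Ψ = Σ_{j=0}^{d_ab−1} λ_ab[j]·u_{a→b}(j) ⊗ u_{b→a}(j). (No orthogonality assumption is needed; this is a structural identity of tree tensor networks.) -/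
open scoped BigOperators

variable {V : Type*} [Fintype V] [DecidableEq V]

/-- A graph tensor network in Vidal form on a finite simple graph `G`: a bond dimension
`d e ≥ 1` and a nonnegative vector `lam e` (the entries `lam e k` for `k < d e` being the
relevant ones) for each edge `e`, and for each vertex `a` a tensor `Γ a` taking a physical
index in `Fin 2` and a bond index for each edge incident to `a`. -/
structure VidalNet (G : SimpleGraph V) [DecidableRel G.Adj] where
  d : G.edgeSet → ℕ
  d_pos : ∀ e, 0 < d e
  lam : G.edgeSet → ℕ → ℝ
  lam_nonneg : ∀ e k, 0 ≤ lam e k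
  Γ : ∀ a : V, Fin 2 → ({e : G.edgeSet // a ∈ (e : Sym2 V)} → ℕ) → ℂ

namespace VidalNet

variable {G : SimpleGraph V} [DecidableRel G.Adj]

/-- The state represented by a graph tensor network in Vidal form:
`Ψ[(i_a)] = Σ_j (Π_{a∈V} Γ_a[i_a,(j_{ab})_{b∈∂a}])·(Π_{e∈E} λ_e[j_e])`. -/
noncomputable def psi (net : VidalNet G) (i : V → Fin 2) : ℂ :=
  ∑ j ∈ Fintype.piFinset (fun e : G.edgeSet => Finset.range (net.d e)),
    (∏ a : V, net.Γ a (i a) (fun e => j e.1)) * ∏ e : G.edgeSet, (net.lam e (j e) : ℂ)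

open scoped Classical in
/-- The Schmidt vector `u_{a→b}(j)` of the subtree `V_{a→b}` of `a` (the connected component
of `a` in the graph with the edge `{a,b}` removed). -/
noncomputable def schmidt (net : VidalNet G) (a b : V) (j : ℕ) :
    ({c : V // c ∈ branchV G b a} → Fin 2) → ℂ := fun i =>
  ∑ k ∈ Fintype.piFinset (fun e : {e : G.edgeSet // e ∈ branchE G b a} =>
      Finset.range (net.d e.1)),
    (∏ c : {c : V // c ∈ branchV G b a},
        net.Γ c.1 (i c)
          (fun e => if (e.1 : Sym2 V) = s(a, b) then j
            else if h : e.1 ∈ branchE G b a then k ⟨e.1, h⟩ else 0)) *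
      ∏ e : {e : G.edgeSet // e ∈ branchE G b a}, (net.lam e.1 (k e) : ℂ)

open scoped Classical in
/-- The Gram matrix `G_{a→b}[j,j'] = ⟨u_{a→b}(j'), u_{a→b}(j)⟩` of the Schmidt vectors,
conjugate-linear in the first argument. -/
noncomputable def gram (net : VidalNet G) (a b : V) (j j' : ℕ) : ℂ :=
  ∑ i : ({c : V // c ∈ branchV G b a} → Fin 2),
    (starRingEnd ℂ) (net.schmidt a b j' i) * net.schmidt a b j i

/-- The local orthogonality condition at the directed edge `a → b`. -/
def LocalOrtho (net : VidalNet G) {a b : V} (hab : G.Adj a b) : Prop :=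
  ∀ j j' : ℕ, j < net.d ⟨s(a, b), (SimpleGraph.mem_edgeSet G).mpr hab⟩ →
    j' < net.d ⟨s(a, b), (SimpleGraph.mem_edgeSet G).mpr hab⟩ →
    (if j = j' then (1 : ℂ) else 0) =
      ∑ ia : Fin 2,
        ∑ g ∈ Fintype.piFinset
            (fun e : {e : {e : G.edgeSet // a ∈ (e : Sym2 V)} // (e.1 : Sym2 V) ≠ s(a, b)} =>
              Finset.range (net.d e.1.1)),
          net.Γ a ia (fun e => if h : (e.1 : Sym2 V) = s(a, b) then j else g ⟨e, h⟩) *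
            (starRingEnd ℂ)
              (net.Γ a ia (fun e => if h : (e.1 : Sym2 V) = s(a, b) then j' else g ⟨e, h⟩)) *
            ∏ e : {e : {e : G.edgeSet // a ∈ (e : Sym2 V)} // (e.1 : Sym2 V) ≠ s(a, b)},
              ((net.lam e.1.1 (g e) : ℂ)) ^ 2

end VidalNet

/-!
Since `{a,b}` is a bridge of the connected graph `G`, deleting it splits the vertices into the two
branches `V_{a→b}` and `V_{b→a}`; every other edge lies in exactly one branch, namely the one
containing its endpoints. A bond assignment on `E` is therefore the same as a triple
`(j_ab, k_A, k_B)` of an index on `{a,b}` and assignments on the two branch edge sets, and each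
summand of `Ψ` factors as `λ_ab[j_ab]` times a product over `V_{a→b}` depending only on
`(j_ab, k_A)` times one over `V_{b→a}` depending only on `(j_ab, k_B)`. Summing over `k_A` and
`k_B` separately produces the two Schmidt vectors.
-/

section Partition

variable {ι κ M : Type*} [Fintype ι] {i₀ : ι} {A B : Set ι}
  [DecidablePred (· ∈ A)] [DecidablePred (· ∈ B)]

theorem Fintype.prod_eq_mul_prod_subtype_mul_prod_subtype [CommMonoid M]
    (hAB : Disjoint A B) (hcover : A ∪ B = {i₀}ᶜ) (f : ι → M) :
    ∏ i, f i = f i₀ * ((∏ i : {i // i ∈ A}, f i) * ∏ i : {i // i ∈ B}, f i) := by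
  classical
  have huniv : (Finset.univ : Finset ι) = insert i₀ (A.toFinset ∪ B.toFinset) := by
    ext i
    by_cases hi : i = i₀ <;> simp [hi, ← Set.mem_union, hcover]
  have hi₀ : i₀ ∉ A.toFinset ∪ B.toFinset := by simp [← Set.mem_union, hcover]
  rw [huniv, Finset.prod_insert hi₀, Finset.prod_union (Set.disjoint_toFinset.mpr hAB),
    ← Finset.prod_subtype A.toFinset (by simp), ← Finset.prod_subtype B.toFinset (by simp)]

theorem Fintype.sum_piFinset_eq_sum_sum_sum [DecidableEq ι] [AddCommMonoid M]
    (hAB : Disjoint A B) (hcover : A ∪ B = {i₀}ᶜ) (s : ι → Finset κ)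
    (F : κ → ({i // i ∈ A} → κ) → ({i // i ∈ B} → κ) → M) :
    ∑ j ∈ Fintype.piFinset s, F (j i₀) (fun i => j i) (fun i => j i) =
      ∑ x ∈ s i₀, ∑ kA ∈ Fintype.piFinset (fun i : {i // i ∈ A} => s i),
        ∑ kB ∈ Fintype.piFinset (fun i : {i // i ∈ B} => s i), F x kA kB := by
  have h₀A : i₀ ∉ A := fun h => hcover.le (Set.mem_union_left B h) rfl
  have h₀B : i₀ ∉ B := fun h => hcover.le (Set.mem_union_right A h) rfl
  have hrest : ∀ i, i ∉ A → i ∉ B → i = i₀ := fun i hA hB => by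
    by_contra hi
    exact (hcover.ge hi).elim hA hB
  simp_rw [← Finset.sum_product']
  refine Finset.sum_nbij' (fun j => (j i₀, fun i => j i, fun i => j i))
    (fun p i => if h : i ∈ A then p.2.1 ⟨i, h⟩ else if h' : i ∈ B then p.2.2 ⟨i, h'⟩ else p.1)
    ?_ ?_ ?_ ?_ (fun _ _ => rfl)
  · intro j hj
    simp only [Finset.mem_product, Fintype.mem_piFinset] at hj ⊢
    exact ⟨hj i₀, fun i => hj i, fun i => hj i⟩
  · rintro ⟨x, kA, kB⟩ hp
    simp only [Finset.mem_product, Fintype.mem_piFinset] at hp ⊢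
    intro i
    split_ifs with hA hB
    · exact hp.2.1 _
    · exact hp.2.2 _
    · exact hrest i hA hB ▸ hp.1
  · intro j _
    funext i
    split_ifs with hA hB
    · rfl
    · rfl
    · rw [hrest i hA hB]
  · rintro ⟨x, kA, kB⟩ _
    simp only [dif_neg h₀A, dif_neg h₀B, Subtype.coe_prop, dif_pos, Prod.mk.injEq, true_and]
    funext i
    rw [dif_neg (Set.disjoint_right.mp hAB i.2)]

end Partition

namespace SimpleGraph

variable {V : Type*} {G : SimpleGraph V} {a b : V}

theorem Walk.reachable_deleteEdges_left_or_right {x y : V} (p : G.Walk x y)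
    (hy : (G.deleteEdges {s(a, b)}).Reachable a y ∨ (G.deleteEdges {s(a, b)}).Reachable b y) :
    (G.deleteEdges {s(a, b)}).Reachable a x ∨ (G.deleteEdges {s(a, b)}).Reachable b x := by
  induction p with
  | nil => exact hy
  | @cons x z y hxz _ ih =>
    by_cases he : s(x, z) = s(a, b)
    · rcases Sym2.eq_iff.mp he with ⟨rfl, -⟩ | ⟨rfl, -⟩
      · exact .inl .rfl
      · exact .inr .rfl
    · have hxz' : (G.deleteEdges {s(a, b)}).Adj x z := by simpa [hxz] using he
      exact (ih hy).imp (·.trans hxz'.symm.reachable) (·.trans hxz'.symm.reachable)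

theorem Connected.reachable_deleteEdges_left_or_right (hG : G.Connected) (a b c : V) :
    (G.deleteEdges {s(a, b)}).Reachable a c ∨ (G.deleteEdges {s(a, b)}).Reachable b c :=
  (hG c a).some.reachable_deleteEdges_left_or_right (.inl .rfl)

end SimpleGraph

section Branch

variable {V : Type*} {G : SimpleGraph V} {a b c : V}

theorem mem_branchV_or_mem_branchV (hG : G.Connected) (a b c : V) :
    c ∈ branchV G b a ∨ c ∈ branchV G a b := by
  simpa only [branchV, Sym2.eq_swap (a := b), Set.mem_ofPred_eq] using
    hG.reachable_deleteEdges_left_or_right a b c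

theorem notMem_branchV_of_mem_branchV (hab : G.IsBridge s(a, b)) (hc : c ∈ branchV G b a) :
    c ∉ branchV G a b := by
  rw [branchV, Sym2.eq_swap] at hc
  exact fun hc' => hab (hc.trans hc'.symm)

variable [DecidableRel G.Adj]

theorem mem_branchE_of_mem_branchV {e : G.edgeSet} (hc : c ∈ branchV G a b)
    (hce : c ∈ (e : Sym2 V)) (hne : (e : Sym2 V) ≠ s(a, b)) : e ∈ branchE G a b := by
  refine ⟨hne, fun x hx => ?_⟩
  obtain ⟨e, he⟩ := e
  induction e using Sym2.ind with
  | _ y z =>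
    have hyz : (G.deleteEdges {s(a, b)}).Adj y z := by simpa [G.mem_edgeSet.mp he] using hne
    rcases Sym2.mem_iff.mp hce with rfl | rfl <;> rcases Sym2.mem_iff.mp hx with rfl | rfl
    · exact hc
    · exact hc.trans hyz.reachable
    · exact hc.trans hyz.symm.reachable
    · exact hc

theorem disjoint_branchE (hab : G.IsBridge s(a, b)) : Disjoint (branchE G b a) (branchE G a b) := by
  refine Set.disjoint_left.mpr fun e heA heB => ?_
  have hx := Sym2.out_fst_mem (e : Sym2 V)
  exact notMem_branchV_of_mem_branchV hab (heA.2 _ hx) (heB.2 _ hx)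

theorem branchE_union_branchE (hG : G.Connected) (hab : G.Adj a b) :
    branchE G b a ∪ branchE G a b = {⟨s(a, b), G.mem_edgeSet.mpr hab⟩}ᶜ := by
  ext e
  simp only [Set.mem_union, Set.mem_compl_iff, Set.mem_singleton_iff]
  constructor
  · rintro (he | he) rfl
    exacts [he.1 Sym2.eq_swap, he.1 rfl]
  · intro hne
    have hne' : (e : Sym2 V) ≠ s(a, b) := fun h => hne (Subtype.ext h)
    have hx := Sym2.out_fst_mem (e : Sym2 V)
    rcases mem_branchV_or_mem_branchV hG a b (e : Sym2 V).out.1 with h | h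
    · exact .inl (mem_branchE_of_mem_branchV h hx (by rwa [Sym2.eq_swap]))
    · exact .inr (mem_branchE_of_mem_branchV h hx hne')

open scoped Classical in
theorem bondIndex_eq_ite_of_mem_branchV [DecidableEq V] {e₀ : G.edgeSet}
    (he₀ : (e₀ : Sym2 V) = s(a, b)) (j : G.edgeSet → ℕ) (hc : c ∈ branchV G b a) :
    (fun e : {e : G.edgeSet // c ∈ (e : Sym2 V)} => j e.1) =
      fun e => if (e.1 : Sym2 V) = s(a, b) then j e₀
        else if _ : e.1 ∈ branchE G b a then j e.1 else 0 := by
  funext e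
  by_cases he : (e.1 : Sym2 V) = s(a, b)
  · rw [if_pos he, Subtype.ext (he.trans he₀.symm)]
  · rw [if_neg he, dif_pos (mem_branchE_of_mem_branchV hc e.2 (by rwa [Sym2.eq_swap]))]

end Branch

namespace VidalNet

variable {V : Type*} [Fintype V] [DecidableEq V] {G : SimpleGraph V} [DecidableRel G.Adj]
  {a b : V}

open scoped Classical in
noncomputable def branchAmplitude (net : VidalNet G) (a b : V) (j : ℕ)
    (k : {e : G.edgeSet // e ∈ branchE G b a} → ℕ) (i : {c : V // c ∈ branchV G b a} → Fin 2) :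
    ℂ :=
  (∏ c : {c : V // c ∈ branchV G b a},
      net.Γ c.1 (i c)
        (fun e => if (e.1 : Sym2 V) = s(a, b) then j
          else if h : e.1 ∈ branchE G b a then k ⟨e.1, h⟩ else 0)) *
    ∏ e : {e : G.edgeSet // e ∈ branchE G b a}, (net.lam e.1 (k e) : ℂ)

open scoped Classical in
theorem schmidt_eq_sum_branchAmplitude (net : VidalNet G) (a b : V) (j : ℕ)
    (i : {c : V // c ∈ branchV G b a} → Fin 2) :
    net.schmidt a b j i = ∑ k ∈ Fintype.piFinset (fun e : {e : G.edgeSet // e ∈ branchE G b a} =>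
      Finset.range (net.d e.1)), net.branchAmplitude a b j k i :=
  rfl

open scoped Classical in
theorem prod_Γ_eq_mul_prod_Γ_branchV (hG : G.Connected) (hbr : G.IsBridge s(a, b))
    (hab : G.Adj a b) (net : VidalNet G) (i : V → Fin 2) (j : G.edgeSet → ℕ) :
    let e₀ : G.edgeSet := ⟨s(a, b), G.mem_edgeSet.mpr hab⟩
    ∏ c, net.Γ c (i c) (fun e => j e.1) =
      (∏ c : {c : V // c ∈ branchV G b a}, net.Γ c (i c)
        (fun e => if (e.1 : Sym2 V) = s(a, b) then j e₀
          else if _ : e.1 ∈ branchE G b a then j e.1 else 0)) *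
      ∏ c : {c : V // c ∈ branchV G a b}, net.Γ c (i c)
        (fun e => if (e.1 : Sym2 V) = s(b, a) then j e₀
          else if _ : e.1 ∈ branchE G a b then j e.1 else 0) := by
  intro e₀
  have hside : ∀ c, c ∉ branchV G b a ↔ c ∈ branchV G a b := fun c =>
    ⟨(mem_branchV_or_mem_branchV hG a b c).resolve_left,
      fun hc hc' => notMem_branchV_of_mem_branchV hbr hc' hc⟩
  rw [← Fintype.prod_subtype_mul_prod_subtype (· ∈ branchV G b a)]
  congr 1
  · exact Finset.prod_congr rfl fun c _ =>
      congrArg _ (bondIndex_eq_ite_of_mem_branchV (e₀ := e₀) rfl j c.2)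
  · exact Fintype.prod_equiv (Equiv.subtypeEquivRight hside) _ _ fun c =>
      congrArg _ (bondIndex_eq_ite_of_mem_branchV (e₀ := e₀) Sym2.eq_swap j ((hside c).mp c.2))

theorem prod_Γ_mul_prod_lam_eq_mul_branchAmplitude (hG : G.Connected) (hbr : G.IsBridge s(a, b))
    (hab : G.Adj a b) (net : VidalNet G) (i : V → Fin 2) (j : G.edgeSet → ℕ) :
    let e₀ : G.edgeSet := ⟨s(a, b), G.mem_edgeSet.mpr hab⟩
    (∏ c, net.Γ c (i c) (fun e => j e.1)) * ∏ e, (net.lam e (j e) : ℂ) =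
      net.lam e₀ (j e₀) * (net.branchAmplitude a b (j e₀) (fun e => j e.1) (fun c => i c.1) *
        net.branchAmplitude b a (j e₀) (fun e => j e.1) (fun c => i c.1)) := by
  classical
  rw [prod_Γ_eq_mul_prod_Γ_branchV hG hbr hab, Fintype.prod_eq_mul_prod_subtype_mul_prod_subtype
    (disjoint_branchE hbr) (branchE_union_branchE hG hab)]
  simp only [branchAmplitude]
  ring

end VidalNet

/-- For a graph tensor network in Vidal form on a finite tree and any edge
`{a,b}`, the represented state factorizes across the edge cut as
`Ψ = Σ_{j<d_ab} λ_ab[j]·u_{a→b}(j) ⊗ u_{b→a}(j)` (under the natural identification of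
`⨂_{c∈V}ℂ²` with the tensor product of the two sides of the cut); no orthogonality
assumption is needed. -/
theorem tree_state_factorizes_across_edge
    {V : Type*} [Fintype V] [DecidableEq V] {G : SimpleGraph V} [DecidableRel G.Adj]
    (hG : G.IsTree) (net : VidalNet G) (a b : V) (hab : G.Adj a b) (i : V → Fin 2) :
    net.psi i =
      ∑ jj ∈ Finset.range (net.d ⟨s(a, b), (SimpleGraph.mem_edgeSet G).mpr hab⟩),
        (net.lam ⟨s(a, b), (SimpleGraph.mem_edgeSet G).mpr hab⟩ jj : ℂ) *
          net.schmidt a b jj (fun c => i c.1) * net.schmidt b a jj (fun c => i c.1) := by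
  classical
  have hbr : G.IsBridge s(a, b) := SimpleGraph.isAcyclic_iff_forall_adj_isBridge.mp hG.2 hab
  rw [VidalNet.psi, Finset.sum_congr rfl fun j _ =>
      VidalNet.prod_Γ_mul_prod_lam_eq_mul_branchAmplitude hG.1 hbr hab net i j,
    Fintype.sum_piFinset_eq_sum_sum_sum (disjoint_branchE hbr) (branchE_union_branchE hG.1 hab) _
      fun x kA kB => (net.lam ⟨s(a, b), G.mem_edgeSet.mpr hab⟩ x : ℂ) *
        (net.branchAmplitude a b x kA (fun c => i c.1) *
          net.branchAmplitude b a x kB (fun c => i c.1))]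
  refine Finset.sum_congr rfl fun jj _ => ?_
  rw [VidalNet.schmidt_eq_sum_branchAmplitude, VidalNet.schmidt_eq_sum_branchAmplitude, mul_assoc,
    Finset.sum_mul_sum]
  simp only [Finset.mul_sum]
end
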